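/- For any z ∈ ℝ^M, ∑_{1≤i<j≤M} |z_i − z_j| = 2 ∑_{i=1}^M ∑_{q=1}^{M−1} max(z_i − t_q, 0) + 2 ∑_{q=1}^{M−1} q·t_q − (M−1) ∑_{i=1}^M z_i, where t_q is the (q+1)-st largest entry of z (equivalently, the (M−q)-th smallest entry). -/

import Mathlib

/-!
After reindexing by `σ` everything is a statement about the sorted vector `w`. For `i < j`,
`|w i - w j| = w i - w j`, so the left side is `∑_{i<j} w i - ∑_{i<j} w j`. On the right,
antitonicity gives `∑_i max (w i - w q) 0 + q * w q = ∑_{i<q} w i`, so the first two terms add up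
to `2 ∑_{i<j} w i`, while `(M - 1) ∑_i w i = ∑_{i<j} (w i + w j)`.
-/

open Finset

section Pairs

variable {ι M R : Type*} [Fintype ι] [LinearOrder ι]

theorem sum_filter_ne_eq_sum_filter_lt_add_swap [AddCommMonoid M] (f : ι × ι → M) :
    ∑ p ∈ univ.filter (fun p : ι × ι => p.1 ≠ p.2), f p =
      ∑ p ∈ univ.filter (fun p : ι × ι => p.1 < p.2), f p +
        ∑ p ∈ univ.filter (fun p : ι × ι => p.1 < p.2), f p.swap := by
  have hswap : ∑ p ∈ univ.filter (fun p : ι × ι => p.2 < p.1), f p =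
      ∑ p ∈ univ.filter (fun p : ι × ι => p.1 < p.2), f p.swap :=
    (sum_equiv (Equiv.prodComm ι ι) (by simp) (by simp)).symm
  rw [← hswap, ← sum_union (disjoint_filter.2 fun p _ h => h.asymm), ← filter_or]
  simp_rw [ne_iff_lt_or_gt]

theorem two_mul_sum_filter_lt [NonAssocSemiring R] (g : ι → ι → R) (hg : ∀ i j, g i j = g j i) :
    2 * ∑ p ∈ univ.filter (fun p : ι × ι => p.1 < p.2), g p.1 p.2 =
      ∑ p ∈ univ.filter (fun p : ι × ι => p.1 ≠ p.2), g p.1 p.2 := by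
  rw [sum_filter_ne_eq_sum_filter_lt_add_swap, two_mul]
  simp only [Prod.fst_swap, Prod.snd_swap, hg]

theorem sum_filter_ne_comp_perm [AddCommMonoid M] (g : ι → ι → M) (σ : Equiv.Perm ι) :
    ∑ p ∈ univ.filter (fun p : ι × ι => p.1 ≠ p.2), g (σ p.1) (σ p.2) =
      ∑ p ∈ univ.filter (fun p : ι × ι => p.1 ≠ p.2), g p.1 p.2 :=
  sum_equiv (σ.prodCongr σ) (by simp) (by simp)

theorem sum_filter_lt_comp_perm [CommRing R] [IsDomain R] [CharZero R] (g : ι → ι → R)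
    (hg : ∀ i j, g i j = g j i) (σ : Equiv.Perm ι) :
    ∑ p ∈ univ.filter (fun p : ι × ι => p.1 < p.2), g (σ p.1) (σ p.2) =
      ∑ p ∈ univ.filter (fun p : ι × ι => p.1 < p.2), g p.1 p.2 := by
  refine mul_left_cancel₀ (two_ne_zero : (2 : R) ≠ 0) ?_
  rw [two_mul_sum_filter_lt g hg,
    two_mul_sum_filter_lt (fun i j => g (σ i) (σ j)) (fun i j => hg _ _), sum_filter_ne_comp_perm]

theorem sum_filter_ne_fst_eq_card_sub_one_mul [Ring R] (f : ι → R) :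
    ∑ p ∈ univ.filter (fun p : ι × ι => p.1 ≠ p.2), f p.1 =
      ((Fintype.card ι : R) - 1) * ∑ i, f i := by
  rw [sum_filter, Fintype.sum_prod_type, mul_sum]
  refine sum_congr rfl fun i _ => ?_
  rw [← sum_filter, filter_ne]
  simp only [sum_const, card_erase_of_mem (mem_univ i), card_univ, nsmul_eq_mul,
    Nat.cast_pred (Fintype.card_pos_iff.2 ⟨i⟩)]

theorem sum_filter_lt_fst_add_snd [Ring R] (f : ι → R) :
    ∑ p ∈ univ.filter (fun p : ι × ι => p.1 < p.2), (f p.1 + f p.2) =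
      ((Fintype.card ι : R) - 1) * ∑ i, f i := by
  rw [← sum_filter_ne_fst_eq_card_sub_one_mul, sum_filter_ne_eq_sum_filter_lt_add_swap,
    sum_add_distrib]
  rfl

theorem sum_filter_lt_eq_sum_Iio [LocallyFiniteOrderBot ι] [AddCommMonoid M] (f : ι × ι → M) :
    ∑ p ∈ univ.filter (fun p : ι × ι => p.1 < p.2), f p = ∑ j, ∑ i ∈ Iio j, f (i, j) := by
  rw [sum_filter, Fintype.sum_prod_type, sum_comm]
  simp_rw [← sum_filter, filter_gt_eq_Iio]

end Pairs

theorem sum_max_sub_add_mul_eq_sum_Iio {R : Type*} [Ring R] [LinearOrder R] [IsOrderedRing R]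
    {n : ℕ} {w : Fin n → R} (hw : Antitone w) (q : Fin n) :
    ∑ i, max (w i - w q) 0 + q * w q = ∑ i ∈ Iio q, w i := by
  have hsplit : ∑ i, max (w i - w q) 0 = ∑ i ∈ Iio q, (w i - w q) := by
    rw [← sum_subset (subset_univ (Iio q))]
    · exact sum_congr rfl fun i hi => max_eq_left (sub_nonneg.2 (hw (mem_Iio.1 hi).le))
    · exact fun i _ hi => max_eq_right (sub_nonpos.2 (hw (not_lt.1 (mem_Iio.not.1 hi))))
  rw [hsplit, sum_sub_distrib, sum_const, Fin.card_Iio, nsmul_eq_mul]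
  exact sub_add_cancel _ _

theorem sum_Icc_one_sub_one_eq_sum_fin {A : Type*} [AddCommMonoid A] (n : ℕ) (H : ℕ → A) :
    ∑ k ∈ Icc 1 (n - 1), H k = ∑ q ∈ univ.filter (fun q : Fin n => 0 < (q : ℕ)), H q := by
  rw [sum_filter, Fin.sum_univ_eq_sum_range (fun k => if 0 < k then H k else 0), ← sum_filter]
  congr 1
  ext
  simp
  omega

/-- Explicit optimal auxiliary variables for (F3): with `w` a non-increasing rearrangement
of `z` and `t_q = w_{q+1}` (the `(q+1)`-st largest entry, 0-indexed `w ⟨q, _⟩`),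
`∑_{i<j} |z_i - z_j| = 2∑_i ∑_{q=1}^{M-1} max(z_i - t_q, 0) + 2∑_{q=1}^{M-1} q·t_q
 - (M-1)∑_i z_i`. -/
theorem stmt_16 (M : ℕ) (z w : Fin M → ℝ) (σ : Equiv.Perm (Fin M))
    (hw : w = z ∘ σ) (hanti : Antitone w) (t : ℕ → ℝ)
    (ht : ∀ q, ∀ _ : 1 ≤ q, ∀ h2 : q ≤ M - 1, t q = w ⟨q, by omega⟩) :
    ∑ q ∈ Finset.univ.filter (fun q : Fin M × Fin M => q.1 < q.2), |z q.1 - z q.2| =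
      2 * ∑ i : Fin M, ∑ q ∈ Finset.Icc 1 (M - 1), max (z i - t q) 0 +
      2 * ∑ q ∈ Finset.Icc 1 (M - 1), (q : ℝ) * t q -
      ((M : ℝ) - 1) * ∑ i : Fin M, z i := by
  have hsum : ∑ i, z i = ∑ i, w i := by rw [hw]; exact (Equiv.sum_comp σ z).symm
  have hmax (q : ℕ) : ∑ i, max (z i - t q) 0 = ∑ i, max (w i - t q) 0 := by
    rw [hw]; exact (Equiv.sum_comp σ fun i => max (z i - t q) 0).symm
  have hterm (q : Fin M) (hq : 0 < (q : ℕ)) :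
      ∑ i, max (z i - t q) 0 + q * t q = ∑ i ∈ Iio q, w i := by
    rw [hmax, ht q hq (by omega)]
    exact sum_max_sub_add_mul_eq_sum_Iio hanti q
  have hpairs : 2 * ∑ i, ∑ q ∈ Icc 1 (M - 1), max (z i - t q) 0 +
      2 * ∑ q ∈ Icc 1 (M - 1), (q : ℝ) * t q =
        2 * ∑ p ∈ univ.filter (fun p : Fin M × Fin M => p.1 < p.2), w p.1 := by
    rw [sum_comm, ← mul_add, ← sum_add_distrib, sum_Icc_one_sub_one_eq_sum_fin,
      sum_congr rfl fun q hq => hterm q (mem_filter.1 hq).2,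
      sum_filter_of_ne fun q _ hq => Nat.pos_of_ne_zero fun hq0 =>
        hq (sum_eq_zero fun i hi => absurd (mem_Iio.1 hi) (by simp [Fin.lt_def, hq0])),
      sum_filter_lt_eq_sum_Iio]
  calc ∑ p ∈ univ.filter (fun p : Fin M × Fin M => p.1 < p.2), |z p.1 - z p.2|
      = ∑ p ∈ univ.filter (fun p : Fin M × Fin M => p.1 < p.2), |w p.1 - w p.2| := by
        rw [hw]
        exact (sum_filter_lt_comp_perm (fun a b => |z a - z b|)
          (fun _ _ => abs_sub_comm _ _) σ).symm
    _ = ∑ p ∈ univ.filter (fun p : Fin M × Fin M => p.1 < p.2), (w p.1 - w p.2) :=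
        sum_congr rfl fun p hp => abs_of_nonneg (sub_nonneg.2 (hanti (mem_filter.1 hp).2.le))
    _ = 2 * ∑ p ∈ univ.filter (fun p : Fin M × Fin M => p.1 < p.2), w p.1 -
          ∑ p ∈ univ.filter (fun p : Fin M × Fin M => p.1 < p.2), (w p.1 + w p.2) := by
        simp only [sum_sub_distrib, sum_add_distrib]
        ring
    _ = _ := by rw [sum_filter_lt_fst_add_snd, Fintype.card_fin, hsum, hpairs]
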